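/- arXiv:2206.10431 — 3 statements merged into one kernel-verified Lean document; each statement's English description precedes it below -/
import Mathlib

section
/- Let H be an n×n real symmetric matrix. Decompose H = H₋ + H₊ where (H₊)_{ij} = H_{ij} if i ≠ j and H_{ij} > 0 and (H₊)_{ij} = 0 otherwise, and let H̃ = H₋ − H₊ be the bosonic form of H. Let α = max_i H_{ii} and β > 0. Then the non-stoquasticity indicator S(H) = (Tr[exp(−βH̃)] − Tr[exp(−βH)]) / Tr[exp(−βH)] satisfies S(H) ≤ 2·exp(β‖αI − H₋‖_{L1})·sinh(β‖H₊‖_{L1}). (Note Tr[exp(−βH)] > 0 since exp(−βH) is positive definite.) -/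
/-!
With `P = β(αI - H₋)` and `Q = βH₊` we have `-βH̃ = P + Q - βαI` and `-βH = P - Q - βαI`, so the
scalar shift cancels and `S(H) = (Tr e^{P+Q} - Tr e^{P-Q}) / Tr e^{P-Q}`.

Numerator: the `k`-th terms of the two exponential series differ by `(P+Q)^k - (P-Q)^k`. Since the
entrywise L1 norm is submultiplicative, an induction carrying `(P+Q)^k + (P-Q)^k` along bounds its
norm by `(a+b)^k - (a-b)^k`, where `a = ‖P‖_{L1}` and `b = ‖Q‖_{L1}`; summing gives
`e^{a+b} - e^{a-b} = 2 e^a sinh b`.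

Denominator: `P - Q = β(αI - H)` is symmetric with nonnegative trace, and `e^λ ≥ 1 + λ` on its
eigenvalues gives `Tr e^{P-Q} ≥ n + Tr (P - Q) ≥ 1`.
-/

open Matrix Filter

/-- The positive off-diagonal part `H₊` of a real matrix:
`(H₊)ᵢⱼ = Hᵢⱼ` if `i ≠ j` and `Hᵢⱼ > 0`, and `0` otherwise. -/
noncomputable def Hplus {n : ℕ} (H : Matrix (Fin n) (Fin n) ℝ) : Matrix (Fin n) (Fin n) ℝ :=
  Matrix.of fun i j => if i ≠ j ∧ 0 < H i j then H i j else 0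

/-- The remaining part `H₋ := H - H₊`. -/
noncomputable def Hminus {n : ℕ} (H : Matrix (Fin n) (Fin n) ℝ) : Matrix (Fin n) (Fin n) ℝ :=
  H - Hplus H

/-- The bosonic form `H̃ := H₋ - H₊` of `H`. -/
noncomputable def bosonic {n : ℕ} (H : Matrix (Fin n) (Fin n) ℝ) : Matrix (Fin n) (Fin n) ℝ :=
  Hminus H - Hplus H

/-- The entrywise L1 norm `‖M‖_{L1} = ∑ᵢⱼ |Mᵢⱼ|`. -/
noncomputable def L1 {n : ℕ} (M : Matrix (Fin n) (Fin n) ℝ) : ℝ :=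
  ∑ i, ∑ j, |M i j|

/-- `α = maxᵢ Hᵢᵢ`, the largest diagonal entry. -/
noncomputable def alphaMax {n : ℕ} [NeZero n] (H : Matrix (Fin n) (Fin n) ℝ) : ℝ :=
  ⨆ i, H i i

namespace RingSeminorm

variable {R : Type*} [Ring R] (f : RingSeminorm R)

theorem apply_pow_add_sub_pow_sub_le (p q : R) (k : ℕ) :
    f ((p + q) ^ k - (p - q) ^ k) ≤ (f p + f q) ^ k - (f p - f q) ^ k := by
  set a := f p
  set b := f q
  have step {x y : R} {s t : ℝ} (hx : f x ≤ s) (hy : f y ≤ t) : f (x * p + y * q) ≤ s * a + t * b :=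
    (map_add_le_add f _ _).trans <| add_le_add
      ((map_mul_le_mul f _ _).trans (mul_le_mul_of_nonneg_right hx (apply_nonneg f p)))
      ((map_mul_le_mul f _ _).trans (mul_le_mul_of_nonneg_right hy (apply_nonneg f q)))
  have sum_and_diff_le (k : ℕ) :
      f ((p + q) ^ (k + 1) + (p - q) ^ (k + 1)) ≤ (a + b) ^ (k + 1) + (a - b) ^ (k + 1) ∧
      f ((p + q) ^ (k + 1) - (p - q) ^ (k + 1)) ≤ (a + b) ^ (k + 1) - (a - b) ^ (k + 1) := by
    induction k with
    | zero =>
      constructor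
      · calc f ((p + q) ^ 1 + (p - q) ^ 1) = f (p + p) := by congr 1; noncomm_ring
          _ ≤ _ := (map_add_le_add f p p).trans_eq (by ring)
      · calc f ((p + q) ^ 1 - (p - q) ^ 1) = f (q + q) := by congr 1; noncomm_ring
          _ ≤ _ := (map_add_le_add f q q).trans_eq (by ring)
    | succ k ih =>
      set S := (p + q) ^ (k + 1) + (p - q) ^ (k + 1)
      set D := (p + q) ^ (k + 1) - (p - q) ^ (k + 1)
      have hS : (p + q) ^ (k + 2) + (p - q) ^ (k + 2) = S * p + D * q := by
        simp only [S, D, pow_succ _ (k + 1)]; noncomm_ring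
      have hD : (p + q) ^ (k + 2) - (p - q) ^ (k + 2) = D * p + S * q := by
        simp only [S, D, pow_succ _ (k + 1)]; noncomm_ring
      rw [hS, hD]
      exact ⟨(step ih.1 ih.2).trans_eq (by ring), (step ih.2 ih.1).trans_eq (by ring)⟩
  cases k with
  | zero => simp
  | succ k => exact (sum_and_diff_le k).2

end RingSeminorm

section L1

variable {n : ℕ}

theorem L1_mul_le (M N : Matrix (Fin n) (Fin n) ℝ) : L1 (M * N) ≤ L1 M * L1 N := by
  calc L1 (M * N) ≤ ∑ i : Fin n, ∑ j : Fin n, ∑ l : Fin n, |M i l| * |N l j| := by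
        unfold L1
        gcongr with i _ j _
        simpa only [mul_apply, abs_mul] using
          Finset.abs_sum_le_sum_abs (fun l => M i l * N l j) Finset.univ
    _ = ∑ i, ∑ l, |M i l| * ∑ j, |N l j| := by
        simp_rw [Finset.mul_sum]
        exact Finset.sum_congr rfl fun i _ => Finset.sum_comm
    _ ≤ ∑ i, ∑ l, |M i l| * L1 N := by
        gcongr with i _ l _
        exact Finset.single_le_sum (f := fun l => ∑ j, |N l j|)
          (fun _ _ => Finset.sum_nonneg fun _ _ => abs_nonneg _) (Finset.mem_univ l)
    _ = L1 M * L1 N := by simp only [L1, Finset.sum_mul]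

noncomputable def L1RingSeminorm : RingSeminorm (Matrix (Fin n) (Fin n) ℝ) where
  toFun := L1
  map_zero' := by simp [L1]
  add_le' M N := by
    simp only [L1, ← Finset.sum_add_distrib, Matrix.add_apply]
    gcongr
    exact abs_add_le _ _
  neg' M := by simp [L1]
  mul_le' := L1_mul_le

theorem L1_smul (c : ℝ) (M : Matrix (Fin n) (Fin n) ℝ) : L1 (c • M) = |c| * L1 M := by
  simp [L1, abs_mul, Finset.mul_sum]

theorem trace_le_L1 (M : Matrix (Fin n) (Fin n) ℝ) : M.trace ≤ L1 M :=
  Finset.sum_le_sum fun i _ => (le_abs_self _).trans <|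
    Finset.single_le_sum (f := fun j => |M i j|) (fun _ _ => abs_nonneg _) (Finset.mem_univ i)

end L1

section HasSumTraceExp

-- `exp_series_hasSum_exp'` needs a normed ring; the `L∞` operator norm induces the product
-- topology, in which `NormedSpace.exp` on matrices is defined.
attribute [local instance] Matrix.linftyOpNormedRing Matrix.linftyOpNormedAlgebra

theorem Matrix.hasSum_trace_exp {ι : Type*} [Fintype ι] [DecidableEq ι] (M : Matrix ι ι ℝ) :
    HasSum (fun k => (k.factorial : ℝ)⁻¹ * (M ^ k).trace) (NormedSpace.exp M).trace := by
  have h := (NormedSpace.exp_series_hasSum_exp' (𝕂 := ℝ) M).map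
    (traceAddMonoidHom ι ℝ) continuous_id.matrix_trace
  simp only [Function.comp_def, traceAddMonoidHom_apply, trace_smul, smul_eq_mul] at h
  exact h

end HasSumTraceExp

theorem trace_exp_add_sub_trace_exp_sub_le {n : ℕ} (P Q : Matrix (Fin n) (Fin n) ℝ) :
    (NormedSpace.exp (P + Q)).trace - (NormedSpace.exp (P - Q)).trace ≤
      Real.exp (L1 P + L1 Q) - Real.exp (L1 P - L1 Q) := by
  have hasSum_exp (x : ℝ) : HasSum (fun k => (k.factorial : ℝ)⁻¹ * x ^ k) (Real.exp x) := by
    simpa only [Real.exp_eq_exp_ℝ, smul_eq_mul] using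
      NormedSpace.exp_series_hasSum_exp' (𝕂 := ℝ) x
  refine hasSum_le (fun k => ?_) ((hasSum_trace_exp _).sub (hasSum_trace_exp _))
    ((hasSum_exp _).sub (hasSum_exp _))
  rw [← mul_sub, ← mul_sub, ← trace_sub]
  gcongr
  exact (trace_le_L1 _).trans (L1RingSeminorm.apply_pow_add_sub_pow_sub_le P Q k)

section Hermitian

variable {ι : Type*} [Fintype ι] [DecidableEq ι] {A : Matrix ι ι ℝ}

theorem Matrix.IsHermitian.trace_exp_eq_sum_exp_eigenvalues (hA : A.IsHermitian) :
    (NormedSpace.exp A).trace = ∑ i, Real.exp (hA.eigenvalues i) := by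
  set U := Unitary.toUnits hA.eigenvectorUnitary
  have hA_conj : A = (U : Matrix ι ι ℝ) * diagonal hA.eigenvalues *
      ((U⁻¹ : (Matrix ι ι ℝ)ˣ) : Matrix ι ι ℝ) := by
    conv_lhs => rw [hA.spectral_theorem, Unitary.conjStarAlgAut_apply]
    rfl
  conv_lhs => rw [hA_conj]
  rw [exp_units_conj, trace_units_conj, exp_diagonal, trace_diagonal]
  simp [Real.exp_eq_exp_ℝ]

theorem Matrix.IsHermitian.card_add_trace_le_trace_exp (hA : A.IsHermitian) :
    Fintype.card ι + A.trace ≤ (NormedSpace.exp A).trace := by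
  rw [hA.trace_exp_eq_sum_exp_eigenvalues, hA.trace_eq_sum_eigenvalues, ← Finset.card_univ,
    ← nsmul_one, ← Finset.sum_const, ← Finset.sum_add_distrib]
  gcongr with i
  simpa [add_comm] using Real.add_one_le_exp (hA.eigenvalues i)

theorem Matrix.IsHermitian.one_le_trace_exp [Nonempty ι] (hA : A.IsHermitian)
    (htr : 0 ≤ A.trace) : 1 ≤ (NormedSpace.exp A).trace := by
  have hcard : (1 : ℝ) ≤ Fintype.card ι := by exact_mod_cast Fintype.card_pos
  linarith [hA.card_add_trace_le_trace_exp]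

end Hermitian

theorem Matrix.trace_exp_add_smul_one {ι : Type*} [Fintype ι] [DecidableEq ι]
    (M : Matrix ι ι ℝ) (c : ℝ) :
    (NormedSpace.exp (M + c • 1)).trace = Real.exp c * (NormedSpace.exp M).trace := by
  have hexp : NormedSpace.exp (c • 1 : Matrix ι ι ℝ) = Real.exp c • 1 := by
    rw [smul_one_eq_diagonal, exp_diagonal, smul_one_eq_diagonal]
    simp [Real.exp_eq_exp_ℝ]
  rw [exp_add_of_commute _ _ ((Commute.one_right M).smul_right c), hexp, mul_smul_one,
    trace_smul, smul_eq_mul]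

theorem Real.exp_add_sub_exp_sub (a b : ℝ) :
    Real.exp (a + b) - Real.exp (a - b) = 2 * Real.exp a * Real.sinh b := by
  rw [Real.sinh_eq, Real.exp_add, Real.exp_sub, Real.exp_neg, div_eq_mul_inv]
  ring

section Stoquastic

variable {n : ℕ} [NeZero n]

theorem le_alphaMax (H : Matrix (Fin n) (Fin n) ℝ) (i : Fin n) : H i i ≤ alphaMax H :=
  le_ciSup (f := fun i => H i i) (Set.finite_range _).bddAbove i

theorem trace_alphaMax_smul_one_sub_nonneg (H : Matrix (Fin n) (Fin n) ℝ) :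
    0 ≤ (alphaMax H • 1 - H).trace := by
  simp only [trace, diag_apply, Matrix.sub_apply, Matrix.smul_apply, one_apply_eq, smul_eq_mul,
    mul_one]
  exact Finset.sum_nonneg fun i _ => sub_nonneg.2 (le_alphaMax H i)

end Stoquastic

/-- **Theorem 1 (NSI upper bound).** For a real symmetric `n×n` matrix `H` and `β > 0`,
the non-stoquasticity indicator
`S(H) = (Tr e^{-βH̃} - Tr e^{-βH}) / Tr e^{-βH}` is bounded by
`2 e^{β‖αI - H₋‖_{L1}} sinh(β‖H₊‖_{L1})`. -/
theorem nsi_upper_bound {n : ℕ} [NeZero n] (H : Matrix (Fin n) (Fin n) ℝ)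
    (hH : H.IsSymm) (β : ℝ) (hβ : 0 < β) :
    ((NormedSpace.exp (-β • bosonic H)).trace - (NormedSpace.exp (-β • H)).trace) /
        (NormedSpace.exp (-β • H)).trace ≤
      2 * Real.exp (β * L1 (alphaMax H • (1 : Matrix (Fin n) (Fin n) ℝ) - Hminus H)) *
        Real.sinh (β * L1 (Hplus H)) := by
  set α := alphaMax H
  set P := β • (α • (1 : Matrix (Fin n) (Fin n) ℝ) - Hminus H)
  set Q := β • Hplus H
  have hH_split : Hminus H + Hplus H = H := sub_add_cancel _ _
  have h_bosonic : -β • bosonic H = P + Q + (-(β * α)) • 1 := by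
    simp only [P, Q, bosonic]
    module
  have h_H : -β • H = P - Q + (-(β * α)) • 1 := by
    conv_lhs => rw [← hH_split]
    module
  have h_den : 1 ≤ (NormedSpace.exp (P - Q)).trace := by
    have h_PQ : P - Q = β • (α • 1 - H) := by
      conv_rhs => rw [← hH_split]
      module
    rw [h_PQ]
    refine IsHermitian.one_le_trace_exp
      (isHermitian_iff_isSymm.2 (((isSymm_one.smul α).sub hH).smul β)) ?_
    rw [trace_smul, smul_eq_mul]
    exact mul_nonneg hβ.le (trace_alphaMax_smul_one_sub_nonneg H)
  have h_num := trace_exp_add_sub_trace_exp_sub_le P Q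
  rw [L1_smul, L1_smul, abs_of_pos hβ, Real.exp_add_sub_exp_sub] at h_num
  have h_rhs_nonneg :
      0 ≤ 2 * Real.exp (β * L1 (α • 1 - Hminus H)) * Real.sinh (β * L1 (Hplus H)) := by
    have hL1 : 0 ≤ L1 (Hplus H) := apply_nonneg L1RingSeminorm (Hplus H)
    positivity
  rw [h_bosonic, h_H, trace_exp_add_smul_one, trace_exp_add_smul_one, ← mul_sub,
    mul_div_mul_left _ _ (Real.exp_pos _).ne']
  exact div_le_of_le_mul₀ (zero_le_one.trans h_den) h_rhs_nonneg
    (h_num.trans (le_mul_of_one_le_right h_rhs_nonneg h_den))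
end

section
/- Fix a dimension n ≥ 1, an inverse temperature β > 0, and a radius R > 0. There exists a constant C > 0 (depending only on n, β, R) such that for every n×n real symmetric matrix H with |H_{ij}| ≤ R for all i, j, the state-diagnostic non-stoquasticity indicator satisfies S(H, e₀) := (⟨e₀| exp(−βH̃) |e₀⟩ − ⟨e₀| exp(−βH) |e₀⟩) / ⟨e₀| exp(−βH) |e₀⟩ ≤ C · ‖Π⊥ H e₀‖², where e₀ is the first standard basis vector, Π⊥ = I − e₀e₀ᵀ, and ‖v‖ is the Euclidean norm. -/
open Matrix Filter

/-- The first standard basis vector `e₀`. -/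
noncomputable def e0 {n : ℕ} [NeZero n] : Fin n → ℝ := Pi.single 0 1

/-- The projector `Π⊥ = I - e₀e₀ᵀ` onto the orthogonal complement of `e₀`. -/
noncomputable def projPerp {n : ℕ} [NeZero n] : Matrix (Fin n) (Fin n) ℝ :=
  1 - vecMulVec e0 e0

/-- The squared Euclidean norm `‖v‖² = ∑ᵢ vᵢ²`. -/
noncomputable def sqNorm {n : ℕ} (v : Fin n → ℝ) : ℝ := ∑ i, (v i) ^ 2

/-!
Write `A = -βH` (or `-βH̃`) as `K + V`, where `V = offBlock A` carries the entries of row and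
column `0` off the diagonal. Then `e₀` is a left and right eigenvector of `K` with eigenvalue
`A₀₀`, and `V₀₀ = 0`. Expanding `exp (K + V)` in powers of `V`, the zeroth-order terms give
`exp A₀₀` in the `(0, 0)` entry and the first-order terms `Kⁱ V Kʲ` give nothing there, so
`|exp(A)₀₀ - exp A₀₀| ≤ exp (2‖A‖) ‖V‖²` in the ℓ∞ operator norm. As `H` and `H̃` share their
diagonal and the absolute values of their entries, both terms of the numerator are within
`O(‖Π⊥ H e₀‖²)` of `exp (-βH₀₀)`. The denominator is bounded below uniformly, since
`exp (-βH)` is positive definite and the bounded symmetric matrices form a compact set.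
-/

open NormedSpace Finset
open scoped Nat

section PowerExpansion

variable {A : Type*}

theorem add_pow_sub_pow_eq_sum [Ring A] (a b : A) (k : ℕ) :
    (a + b) ^ k - a ^ k = ∑ j ∈ range k, a ^ j * b * (a + b) ^ (k - 1 - j) := by
  induction k with
  | zero => simp
  | succ k ih =>
    have hshift : ∀ j ∈ range k, a ^ (j + 1) * b * (a + b) ^ (k + 1 - 1 - (j + 1)) =
        a * (a ^ j * b * (a + b) ^ (k - 1 - j)) := fun j _ => by
      rw [show k + 1 - 1 - (j + 1) = k - 1 - j by omega, pow_succ', mul_assoc, mul_assoc,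
        mul_assoc]
    rw [sum_range_succ', sum_congr rfl hshift, ← mul_sum, ← ih, Nat.add_sub_cancel,
      Nat.sub_zero, pow_succ' a, pow_succ' (a + b)]
    noncomm_ring

variable [NormedRing A] [NormOneClass A]

theorem norm_pow_mul_mul_pow_le (a b c : A) (i j : ℕ) :
    ‖a ^ i * b * c ^ j‖ ≤ ‖a‖ ^ i * ‖b‖ * ‖c‖ ^ j :=
  (norm_mul₃_le ..).trans <| by gcongr <;> exact norm_pow_le _ _

theorem norm_add_pow_sub_pow_le (a b : A) (k : ℕ) :
    ‖(a + b) ^ k - a ^ k‖ ≤ k * (‖a‖ + ‖b‖) ^ (k - 1) * ‖b‖ := by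
  set N := ‖a‖ + ‖b‖
  have hterm : ∀ j ∈ range k, ‖a ^ j * b * (a + b) ^ (k - 1 - j)‖ ≤ N ^ (k - 1) * ‖b‖ := by
    intro j hj
    have hjk : j + (k - 1 - j) = k - 1 := by have := mem_range.mp hj; omega
    calc _ ≤ ‖a‖ ^ j * ‖b‖ * ‖a + b‖ ^ (k - 1 - j) := norm_pow_mul_mul_pow_le ..
      _ ≤ N ^ j * ‖b‖ * N ^ (k - 1 - j) := by
        gcongr
        · exact le_add_of_nonneg_right (norm_nonneg b)
        · exact norm_add_le a b
      _ = N ^ (k - 1) * ‖b‖ := by rw [mul_right_comm, ← pow_add, hjk]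
  rw [add_pow_sub_pow_eq_sum]
  refine (norm_sum_le _ _).trans <| (sum_le_sum hterm).trans_eq ?_
  rw [sum_const, card_range, nsmul_eq_mul, mul_assoc]

theorem norm_add_pow_sub_pow_sub_sum_le (a b : A) (k : ℕ) :
    ‖(a + b) ^ k - a ^ k - ∑ j ∈ range k, a ^ j * b * a ^ (k - 1 - j)‖ ≤
      k * (k - 1) * (‖a‖ + ‖b‖) ^ (k - 2) * ‖b‖ ^ 2 := by
  set N := ‖a‖ + ‖b‖
  have hN : 0 ≤ N := by positivity
  have hterm : ∀ j ∈ range k, ‖a ^ j * b * ((a + b) ^ (k - 1 - j) - a ^ (k - 1 - j))‖ ≤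
      (k - 1) * N ^ (k - 2) * ‖b‖ ^ 2 := by
    intro j hj
    have hjk := mem_range.mp hj
    set m := k - 1 - j
    have hm : (m : ℝ) * N ^ j * N ^ (m - 1) ≤ (k - 1) * N ^ (k - 2) := by
      rcases Nat.eq_zero_or_pos m with hm0 | hm0
      · have : (1 : ℝ) ≤ k := by exact_mod_cast hjk.trans_le' (Nat.zero_le j)
        rw [hm0, Nat.cast_zero, zero_mul, zero_mul]
        exact mul_nonneg (by linarith) (pow_nonneg hN _)
      · rw [mul_assoc, ← pow_add, show j + (m - 1) = k - 2 by omega]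
        have : ((m + 1 : ℕ) : ℝ) ≤ k := by exact_mod_cast (by omega : m + 1 ≤ k)
        push_cast at this
        gcongr
        linarith
    have ha : ‖a ^ j‖ ≤ N ^ j :=
      (norm_pow_le a j).trans (pow_le_pow_left₀ (norm_nonneg a)
        (le_add_of_nonneg_right (norm_nonneg b)) j)
    calc _ ≤ ‖a ^ j‖ * ‖b‖ * ‖(a + b) ^ m - a ^ m‖ := norm_mul₃_le ..
      _ ≤ N ^ j * ‖b‖ * (m * N ^ (m - 1) * ‖b‖) := by
        gcongr
        exact norm_add_pow_sub_pow_le a b m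
      _ = (m * N ^ j * N ^ (m - 1)) * ‖b‖ ^ 2 := by ring
      _ ≤ _ := by gcongr
  have hsplit : (a + b) ^ k - a ^ k - ∑ j ∈ range k, a ^ j * b * a ^ (k - 1 - j) =
      ∑ j ∈ range k, a ^ j * b * ((a + b) ^ (k - 1 - j) - a ^ (k - 1 - j)) := by
    simp_rw [add_pow_sub_pow_eq_sum a b k, ← sum_sub_distrib, mul_sub]
  rw [hsplit]
  refine (norm_sum_le _ _).trans <| (sum_le_sum hterm).trans_eq ?_
  rw [sum_const, card_range, nsmul_eq_mul]
  ring

variable [NormedAlgebra ℝ A] [CompleteSpace A]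

theorem abs_map_exp_add_sub_exp_le (ℓ : A →L[ℝ] ℝ) (hℓ : ∀ x, |ℓ x| ≤ ‖x‖) {a b : A} {c : ℝ}
    (ha : ∀ k, ℓ (a ^ k) = c ^ k) (hab : ∀ i j, ℓ (a ^ i * b * a ^ j) = 0) :
    |ℓ (exp (a + b)) - Real.exp c| ≤ Real.exp (‖a‖ + ‖b‖) * ‖b‖ ^ 2 := by
  set N := ‖a‖ + ‖b‖
  set t : ℕ → ℝ := fun k => (k ! : ℝ)⁻¹ * (ℓ ((a + b) ^ k) - c ^ k)
  have hsum : HasSum t (ℓ (exp (a + b)) - Real.exp c) := by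
    have h1 := (exp_series_hasSum_exp' (𝕂 := ℝ) (a + b)).mapL ℓ
    have h2 := exp_series_hasSum_exp' (𝕂 := ℝ) c
    rw [← Real.exp_eq_exp_ℝ] at h2
    simpa only [map_smul, smul_eq_mul, ← mul_sub] using h1.sub h2
  have hshift : HasSum (fun m => t (m + 2)) (ℓ (exp (a + b)) - Real.exp c) := by
    have hlow : ∑ k ∈ range 2, t k = 0 := by
      have h0 : ℓ 1 = 1 := by simpa using ha 0
      have h1 : ℓ a = c := by simpa using ha 1
      have hb : ℓ b = 0 := by simpa using hab 0 0
      simp [t, sum_range_succ, h0, h1, hb]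
    simpa [hlow] using (hasSum_nat_add_iff' 2).mpr hsum
  have hbound : ∀ m, ‖t (m + 2)‖ ≤ ‖b‖ ^ 2 * (N ^ m / m !) := by
    intro m
    have hfirst : ℓ ((a + b) ^ (m + 2)) - c ^ (m + 2) = ℓ ((a + b) ^ (m + 2) - a ^ (m + 2) -
        ∑ j ∈ range (m + 2), a ^ j * b * a ^ (m + 2 - 1 - j)) := by
      simp [map_sub, map_sum, ha, hab]
    have hfact : ((m + 2) ! : ℝ) = (m + 2) * (m + 1) * m ! := by
      push_cast [Nat.factorial_succ]; ring
    calc ‖t (m + 2)‖ = ((m + 2) ! : ℝ)⁻¹ * |ℓ ((a + b) ^ (m + 2) - a ^ (m + 2) -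
          ∑ j ∈ range (m + 2), a ^ j * b * a ^ (m + 2 - 1 - j))| := by
          rw [Real.norm_eq_abs, abs_mul, hfirst, abs_inv, Nat.abs_cast]
      _ ≤ ((m + 2) ! : ℝ)⁻¹ * ((m + 2 : ℕ) * ((m + 2 : ℕ) - 1) * N ^ (m + 2 - 2) * ‖b‖ ^ 2) := by
          gcongr
          exact (hℓ _).trans (norm_add_pow_sub_pow_sub_sum_le a b (m + 2))
      _ = ‖b‖ ^ 2 * (N ^ m / m !) := by
          rw [hfact, Nat.add_sub_cancel]
          field_simp
          push_cast
          ring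
  have hexpN : HasSum (fun m => ‖b‖ ^ 2 * (N ^ m / m !)) (‖b‖ ^ 2 * Real.exp N) := by
    rw [Real.exp_eq_exp_ℝ]
    exact (expSeries_div_hasSum_exp N).mul_left _
  rw [← Real.norm_eq_abs, mul_comm]
  exact hshift.norm_le_of_bounded hexpN hbound

end PowerExpansion

section Eigenvector

variable {ι R : Type*} [Fintype ι] [DecidableEq ι] [CommRing R] {K : Matrix ι ι R} {v : ι → R}
  {c : R}

theorem pow_mulVec_of_mulVec_eq_smul (hK : K *ᵥ v = c • v) (k : ℕ) : K ^ k *ᵥ v = c ^ k • v := by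
  induction k with
  | zero => simp
  | succ k ih => rw [pow_succ, ← mulVec_mulVec, hK, mulVec_smul, ih, smul_smul, pow_succ']

theorem vecMul_pow_of_vecMul_eq_smul (hK : v ᵥ* K = c • v) (k : ℕ) : v ᵥ* K ^ k = c ^ k • v := by
  induction k with
  | zero => simp
  | succ k ih => rw [pow_succ', ← vecMul_vecMul, hK, smul_vecMul, ih, smul_smul, pow_succ']

theorem dotProduct_pow_mul_mul_pow_mulVec (hKv : K *ᵥ v = c • v) (hvK : v ᵥ* K = c • v)
    (B : Matrix ι ι R) (i j : ℕ) :
    v ⬝ᵥ (K ^ i * B * K ^ j) *ᵥ v = c ^ i * c ^ j * (v ⬝ᵥ B *ᵥ v) := by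
  rw [← mulVec_mulVec, ← mulVec_mulVec, pow_mulVec_of_mulVec_eq_smul hKv, dotProduct_mulVec,
    vecMul_pow_of_vecMul_eq_smul hvK, mulVec_smul, smul_dotProduct, dotProduct_smul,
    smul_eq_mul, smul_eq_mul]
  ring

end Eigenvector

section LinftyNorm

open scoped Matrix.Norms.Operator

variable {m p : Type*} [Fintype m] [Fintype p]

theorem abs_apply_le_linfty_opNorm (M : Matrix m p ℝ) (i : m) (j : p) : |M i j| ≤ ‖M‖ := by
  rw [← Real.norm_eq_abs, ← coe_nnnorm, ← coe_nnnorm, NNReal.coe_le_coe, linfty_opNNNorm_def]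
  exact (single_le_sum (fun _ _ => zero_le) (mem_univ j)).trans
    (le_sup (f := fun i => ∑ j, ‖M i j‖₊) (mem_univ i))

theorem linfty_opNorm_mono {A B : Matrix m p ℝ} (h : ∀ i j, |B i j| ≤ |A i j|) : ‖B‖ ≤ ‖A‖ := by
  rw [← coe_nnnorm, ← coe_nnnorm, NNReal.coe_le_coe, linfty_opNNNorm_def, linfty_opNNNorm_def]
  refine sup_mono_fun fun i _ => sum_le_sum fun j _ => ?_
  rw [← NNReal.coe_le_coe, coe_nnnorm, coe_nnnorm, Real.norm_eq_abs, Real.norm_eq_abs]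
  exact h i j

theorem linfty_opNorm_le_of_sum_abs_le [Nonempty m] {M : Matrix m p ℝ} {c : ℝ}
    (h : ∀ i, ∑ j, |M i j| ≤ c) : ‖M‖ ≤ c := by
  have hc : 0 ≤ c := (sum_nonneg fun j _ => abs_nonneg _).trans (h (Classical.arbitrary m))
  rw [← coe_nnnorm, linfty_opNNNorm_def, ← NNReal.coe_mk c hc, NNReal.coe_le_coe]
  refine Finset.sup_le fun i _ => ?_
  rw [← NNReal.coe_le_coe]
  push_cast
  simpa using h i

theorem linfty_opNorm_le_card_mul [Nonempty m] {A : Matrix m p ℝ} {R : ℝ}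
    (hA : ∀ i j, |A i j| ≤ R) : ‖A‖ ≤ Fintype.card p * R :=
  linfty_opNorm_le_of_sum_abs_le fun i =>
    (sum_le_sum fun j _ => hA i j).trans_eq (by simp)

end LinftyNorm

theorem posDef_exp_of_isSymm {ι : Type*} [Fintype ι] [DecidableEq ι] {A : Matrix ι ι ℝ}
    (hA : A.IsSymm) : (exp A).PosDef := by
  set M := exp ((2⁻¹ : ℝ) • A)
  have hM : Mᴴ = M := by
    rw [conjTranspose_eq_transpose_of_trivial]
    exact (hA.smul _).exp
  have hsq : exp A = Mᴴ * M := by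
    rw [hM, ← sq, ← Matrix.exp_nsmul, two_nsmul, ← add_smul]
    norm_num
  rw [hsq]
  exact .conjTranspose_mul_self M (mulVec_injective_iff_isUnit.mpr (Matrix.isUnit_exp _))

section FirstCoordinate

open scoped Matrix.Norms.Operator

variable {n : ℕ}

theorem bosonic_apply (H : Matrix (Fin n) (Fin n) ℝ) (i j : Fin n) :
    bosonic H i j = if i ≠ j ∧ 0 < H i j then -H i j else H i j := by
  simp only [bosonic, Hminus, Matrix.sub_apply, Hplus, of_apply]
  split <;> ring

theorem abs_bosonic_apply (H : Matrix (Fin n) (Fin n) ℝ) (i j : Fin n) :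
    |bosonic H i j| = |H i j| := by
  rw [bosonic_apply]
  split <;> simp

theorem bosonic_apply_self (H : Matrix (Fin n) (Fin n) ℝ) (i : Fin n) :
    bosonic H i i = H i i := by
  simp [bosonic_apply]

variable [NeZero n]

theorem apply_zero_zero_eq_dotProduct (M : Matrix (Fin n) (Fin n) ℝ) : M 0 0 = e0 ⬝ᵥ M *ᵥ e0 := by
  simp [e0, mulVec_single, single_dotProduct]

def offBlock (A : Matrix (Fin n) (Fin n) ℝ) : Matrix (Fin n) (Fin n) ℝ :=
  of fun i j => if (i = 0 ↔ j = 0) then 0 else A i j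

theorem sub_offBlock_mulVec_e0 (A : Matrix (Fin n) (Fin n) ℝ) :
    (A - offBlock A) *ᵥ e0 = A 0 0 • e0 := by
  ext i
  by_cases hi : i = 0 <;> simp [e0, offBlock, mulVec_single, hi]

theorem e0_vecMul_sub_offBlock (A : Matrix (Fin n) (Fin n) ℝ) :
    e0 ᵥ* (A - offBlock A) = A 0 0 • e0 := by
  ext j
  by_cases hj : j = 0 <;> simp [e0, offBlock, single_vecMul, hj]

theorem offBlock_smul (c : ℝ) (A : Matrix (Fin n) (Fin n) ℝ) :
    offBlock (c • A) = c • offBlock A := by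
  ext i j
  by_cases h : (i = 0 ↔ j = 0) <;> simp [offBlock, h]

theorem abs_exp_apply_zero_zero_sub_le (A : Matrix (Fin n) (Fin n) ℝ) :
    |exp A 0 0 - Real.exp (A 0 0)| ≤ Real.exp (2 * ‖A‖) * ‖offBlock A‖ ^ 2 := by
  set K := A - offBlock A
  have hKv := sub_offBlock_mulVec_e0 A
  have hvK := e0_vecMul_sub_offBlock A
  have hmask : ∀ i j, |K i j| ≤ |A i j| ∧ |offBlock A i j| ≤ |A i j| := by
    intro i j
    by_cases h : (i = 0 ↔ j = 0) <;> simp [K, offBlock, h]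
  let ℓ := (entryLinearMap ℝ ℝ (0 : Fin n) (0 : Fin n)).toContinuousLinearMap
  have hpow : ∀ k, ℓ (K ^ k) = A 0 0 ^ k := fun k => by
    change (K ^ k) 0 0 = _
    rw [apply_zero_zero_eq_dotProduct (K ^ k), pow_mulVec_of_mulVec_eq_smul hKv, dotProduct_smul]
    simp [e0]
  have hfirst : ∀ i j, ℓ (K ^ i * offBlock A * K ^ j) = 0 := fun i j => by
    change (K ^ i * offBlock A * K ^ j) 0 0 = 0
    rw [apply_zero_zero_eq_dotProduct (K ^ i * offBlock A * K ^ j),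
      dotProduct_pow_mul_mul_pow_mulVec hKv hvK, ← apply_zero_zero_eq_dotProduct (offBlock A)]
    simp [offBlock]
  have key := abs_map_exp_add_sub_exp_le ℓ (fun M => abs_apply_le_linfty_opNorm M 0 0) hpow hfirst
  rw [sub_add_cancel] at key
  refine key.trans ?_
  gcongr
  linarith [linfty_opNorm_mono fun i j => (hmask i j).1,
    linfty_opNorm_mono fun i j => (hmask i j).2]

theorem abs_exp_neg_smul_apply_sub_le {β : ℝ} (hβ : 0 < β) {R : ℝ}
    {A : Matrix (Fin n) (Fin n) ℝ} (hA : ∀ i j, |A i j| ≤ R) :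
    |exp (-β • A) 0 0 - Real.exp (-β * A 0 0)| ≤
      Real.exp (2 * β * (n * R)) * β ^ 2 * ‖offBlock A‖ ^ 2 := by
  have hnorm : ∀ M : Matrix (Fin n) (Fin n) ℝ, ‖-β • M‖ = β * ‖M‖ := fun M => by
    rw [norm_smul, Real.norm_eq_abs, abs_neg, abs_of_pos hβ]
  have h := abs_exp_apply_zero_zero_sub_le (-β • A)
  rw [offBlock_smul, hnorm, hnorm, Matrix.smul_apply, smul_eq_mul] at h
  have hexp : Real.exp (2 * (β * ‖A‖)) ≤ Real.exp (2 * β * (n * R)) := by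
    rw [← mul_assoc]
    gcongr
    simpa using linfty_opNorm_le_card_mul hA
  calc _ ≤ Real.exp (2 * (β * ‖A‖)) * (β * ‖offBlock A‖) ^ 2 := h
    _ ≤ _ := by
      rw [mul_pow, ← mul_assoc]
      gcongr

theorem exists_pos_le_exp_neg_smul_apply (β R : ℝ) :
    ∃ d > 0, ∀ H : Matrix (Fin n) (Fin n) ℝ, H.IsSymm → (∀ i j, |H i j| ≤ R) →
      d ≤ exp (-β • H) 0 0 := by
  let s : Set (Matrix (Fin n) (Fin n) ℝ) :=
    {H | H.IsSymm} ∩ Set.univ.pi fun _ => Set.univ.pi fun _ => Set.Icc (-R) R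
  have hs : IsCompact s :=
    (isCompact_univ_pi fun _ => isCompact_univ_pi fun _ => isCompact_Icc).inter_left
      (isClosed_eq continuous_id.matrix_transpose continuous_id)
  have hcont : Continuous fun H : Matrix (Fin n) (Fin n) ℝ => exp (-β • H) 0 0 :=
    (exp_continuous.comp (continuous_const_smul _)).matrix_elem 0 0
  obtain ⟨d, hd, hle⟩ := hs.exists_forall_le' hcont.continuousOn fun H hH =>
    (posDef_exp_of_isSymm (hH.1.smul _)).diag_pos
  exact ⟨d, hd, fun H hH hR => hle H ⟨hH, fun i _ j _ => abs_le.mp (hR i j)⟩⟩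

theorem projPerp_mulVec_mulVec_e0_apply (H : Matrix (Fin n) (Fin n) ℝ) (i : Fin n) :
    (projPerp *ᵥ (H *ᵥ e0)) i = if i = 0 then 0 else H i 0 := by
  rw [projPerp, e0, mulVec_single_one, sub_mulVec, one_mulVec, vecMulVec_mulVec]
  by_cases hi : i = 0 <;> simp [hi]

theorem norm_offBlock_le_sum_abs {H : Matrix (Fin n) (Fin n) ℝ} (hH : H.IsSymm) :
    ‖offBlock H‖ ≤ ∑ i, |(projPerp *ᵥ (H *ᵥ e0)) i| := by
  simp_rw [projPerp_mulVec_mulVec_e0_apply]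
  refine linfty_opNorm_le_of_sum_abs_le fun i => ?_
  by_cases hi : i = 0
  · subst hi
    refine (sum_congr rfl fun j _ => ?_).le
    by_cases hj : j = 0 <;> simp [offBlock, hj, hH.apply j 0]
  · have hrow : ∑ j, |offBlock H i j| = |H i 0| := by
      rw [sum_eq_single 0 (fun j _ hj => by simp [offBlock, hi, hj]) (by simp)]
      simp [offBlock, hi]
    rw [hrow]
    simpa [hi] using single_le_sum (f := fun j : Fin n => |if j = 0 then 0 else H j 0|)
      (fun _ _ => abs_nonneg _) (mem_univ i)

theorem norm_offBlock_sq_le {H : Matrix (Fin n) (Fin n) ℝ} (hH : H.IsSymm) :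
    ‖offBlock H‖ ^ 2 ≤ n * sqNorm (projPerp *ᵥ (H *ᵥ e0)) := by
  calc ‖offBlock H‖ ^ 2 ≤ (∑ i, |(projPerp *ᵥ (H *ᵥ e0)) i|) ^ 2 := by
        gcongr
        exact norm_offBlock_le_sum_abs hH
    _ ≤ n * sqNorm (projPerp *ᵥ (H *ᵥ e0)) := by
        simpa [sqNorm] using sq_sum_le_card_mul_sum_sq (s := univ)
          (f := fun i => |(projPerp *ᵥ (H *ᵥ e0)) i|)

theorem norm_offBlock_bosonic (H : Matrix (Fin n) (Fin n) ℝ) :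
    ‖offBlock (bosonic H)‖ = ‖offBlock H‖ := by
  have h : ∀ i j, |offBlock (bosonic H) i j| = |offBlock H i j| := fun i j => by
    simp only [offBlock, of_apply]
    split <;> simp [abs_bosonic_apply]
  exact le_antisymm (linfty_opNorm_mono fun i j => (h i j).le)
    (linfty_opNorm_mono fun i j => (h i j).ge)

theorem exp_neg_smul_bosonic_apply_sub_le {β : ℝ} (hβ : 0 < β) {R : ℝ}
    {H : Matrix (Fin n) (Fin n) ℝ} (hH : H.IsSymm) (hR : ∀ i j, |H i j| ≤ R) :
    exp (-β • bosonic H) 0 0 - exp (-β • H) 0 0 ≤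
      2 * Real.exp (2 * β * (n * R)) * β ^ 2 * (n * sqNorm (projPerp *ᵥ (H *ᵥ e0))) := by
  have hbos := abs_exp_neg_smul_apply_sub_le hβ (A := bosonic H)
    fun i j => (abs_bosonic_apply H i j).trans_le (hR i j)
  rw [bosonic_apply_self, norm_offBlock_bosonic] at hbos
  have htri := abs_sub_le (exp (-β • bosonic H) 0 0) (Real.exp (-β * H 0 0)) (exp (-β • H) 0 0)
  rw [abs_sub_comm (Real.exp _)] at htri
  calc _ ≤ 2 * Real.exp (2 * β * (n * R)) * β ^ 2 * ‖offBlock H‖ ^ 2 := by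
        linarith [le_abs_self (exp (-β • bosonic H) 0 0 - exp (-β • H) 0 0),
          abs_exp_neg_smul_apply_sub_le hβ hR]
    _ ≤ _ := by
        gcongr
        exact norm_offBlock_sq_le hH

end FirstCoordinate

theorem state_nsi_upper_bound_general {n : ℕ} [NeZero n] (β : ℝ) (hβ : 0 < β) (R : ℝ) :
    ∃ C : ℝ, 0 < C ∧
      ∀ H : Matrix (Fin n) (Fin n) ℝ, H.IsSymm → (∀ i j, |H i j| ≤ R) →
        ((NormedSpace.exp (-β • bosonic H)) 0 0 - (NormedSpace.exp (-β • H)) 0 0) /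
            (NormedSpace.exp (-β • H)) 0 0 ≤
          C * sqNorm (projPerp.mulVec (H.mulVec e0)) := by
  obtain ⟨d, hd, hden⟩ := exists_pos_le_exp_neg_smul_apply (n := n) β R
  have hn : (0 : ℝ) < n := Nat.cast_pos.mpr (NeZero.pos n)
  refine ⟨2 * Real.exp (2 * β * (n * R)) * β ^ 2 * n / d, by positivity, fun H hH hR => ?_⟩
  have hsq : 0 ≤ sqNorm (projPerp *ᵥ (H *ᵥ e0)) := sum_nonneg fun i _ => sq_nonneg _
  calc _ ≤ 2 * Real.exp (2 * β * (n * R)) * β ^ 2 * (n * sqNorm (projPerp *ᵥ (H *ᵥ e0))) / d :=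
        div_le_div₀ (by positivity) (exp_neg_smul_bosonic_apply_sub_le hβ hH hR) hd
          (hden H hH hR)
    _ = _ := by ring

/-- **Theorem 2 (state-NSI upper bound).** For fixed dimension `n ≥ 1`, inverse temperature
`β > 0` and radius `R > 0`, there is a constant `C > 0` such that every real symmetric `H`
with `|Hᵢⱼ| ≤ R` satisfies
`S(H, e₀) = (⟨e₀|e^{-βH̃}|e₀⟩ - ⟨e₀|e^{-βH}|e₀⟩)/⟨e₀|e^{-βH}|e₀⟩ ≤ C ‖Π⊥ H e₀‖²`. -/
theorem state_nsi_upper_bound {n : ℕ} [NeZero n] (β : ℝ) (hβ : 0 < β) (R : ℝ) (hR : 0 < R) :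
    ∃ C : ℝ, 0 < C ∧
      ∀ H : Matrix (Fin n) (Fin n) ℝ, H.IsSymm → (∀ i j, |H i j| ≤ R) →
        ((NormedSpace.exp (-β • bosonic H)) 0 0 - (NormedSpace.exp (-β • H)) 0 0) /
            (NormedSpace.exp (-β • H)) 0 0 ≤
          C * sqNorm (projPerp.mulVec (H.mulVec e0)) :=
  state_nsi_upper_bound_general β hβ R
end

section
/- (Imaginary-time evolution converges to the ground state) Let H be an n×n Hermitian (or real symmetric) matrix with smallest eigenvalue E₀, and let P₀ be the orthogonal projection onto the E₀-eigenspace of H. Let ψ be a vector with P₀ψ ≠ 0. Then, as τ → ∞, the normalized imaginary-time-evolved state exp(−τH)ψ / ‖exp(−τH)ψ‖ converges to P₀ψ / ‖P₀ψ‖. -/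
/-!
Multiplying by the positive scalar `exp (τ E₀)` does not change the normalised state, and
`exp (τ E₀) • exp (-τ H) = cfc (x ↦ exp (-τ (x - E₀))) H`. On the finite spectrum of `H`, which
lies above `E₀`, these functions converge to the indicator of `{E₀}`, so the rescaled evolution
converges to the spectral projection of `H` at `E₀`. That projection is `P₀`: two self-adjoint
elements each fixing the other one's range coincide. Normalisation is continuous away from `0`.
-/

open Matrix Filter Topology

theorem Set.Finite.tendstoUniformlyOn {α β ι : Type*} [UniformSpace β] {s : Set α}
    (hs : s.Finite) {F : ι → α → β} {f : α → β} {l : Filter ι}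
    (h : ∀ x ∈ s, Tendsto (F · x) l (𝓝 (f x))) : TendstoUniformlyOn F f l s := fun _ hu =>
  hs.eventually_all.2 fun x hx => Uniform.tendsto_nhds_right.1 (h x hx) hu

theorem IsSelfAdjoint.eq_of_mul_eq_of_mul_eq {R : Type*} [Mul R] [StarMul R] {p q : R}
    (hp : IsSelfAdjoint p) (hq : IsSelfAdjoint q) (hpq : p * q = q) (hqp : q * p = p) :
    p = q := by
  rw [← hqp, ← hq.star_eq, ← hp.star_eq, ← star_mul, hpq, hq.star_eq]

namespace NormedSpace

variable {V : Type*} [NormedAddCommGroup V] [NormedSpace ℝ V]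

theorem continuousAt_normalize {x : V} (hx : x ≠ 0) : ContinuousAt normalize x :=
  (continuous_norm.continuousAt.inv₀ (norm_ne_zero_iff.mpr hx)).smul continuousAt_id

theorem tendsto_normalize_of_tendsto_smul {ι : Type*} {l : Filter ι} {c : ι → ℝ} {f : ι → V}
    {x : V} (hc : ∀ i, 0 < c i) (h : Tendsto (fun i => c i • f i) l (𝓝 x)) (hx : x ≠ 0) :
    Tendsto (fun i => normalize (f i)) l (𝓝 (normalize x)) := by
  simpa only [Function.comp_def, normalize_smul_of_pos (hc _)] using
    (continuousAt_normalize hx).tendsto.comp h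

end NormedSpace

section SpectralProjection

variable {A : Type*} [Ring A] [StarRing A] [TopologicalSpace A] [Algebra ℝ A]
  [ContinuousFunctionalCalculus ℝ A IsSelfAdjoint]

/-- Only meaningful when `spectrum ℝ a` is finite: otherwise the indicator of `{μ}` is
discontinuous on the spectrum and `cfc` returns the junk value `0`. -/
noncomputable def spectralProjection (a : A) (μ : ℝ) : A :=
  cfc (fun x : ℝ => if x = μ then (1 : ℝ) else 0) a

variable {a : A} {μ : ℝ}

theorem isSelfAdjoint_spectralProjection (a : A) (μ : ℝ) :
    IsSelfAdjoint (spectralProjection a μ) :=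
  cfc_predicate _ _

theorem mul_spectralProjection (hfin : (spectrum ℝ a).Finite) (ha : IsSelfAdjoint a) :
    a * spectralProjection a μ = μ • spectralProjection a μ := by
  have hcont : ∀ f : ℝ → ℝ, ContinuousOn f (spectrum ℝ a) := hfin.continuousOn
  have hmul := cfc_mul (fun x => x) (fun x : ℝ => if x = μ then (1 : ℝ) else 0) a
    (hcont _) (hcont _)
  rw [cfc_id' ℝ a] at hmul
  rw [spectralProjection, ← hmul, ← cfc_const_mul _ _ _ (hcont _)]
  refine cfc_congr fun x _ => ?_
  split_ifs with h <;> simp [h]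

theorem spectralProjection_mul_of_mul_eq_smul (hfin : (spectrum ℝ a).Finite)
    (ha : IsSelfAdjoint a) {b : A} (hb : a * b = μ • b) :
    spectralProjection a μ * b = b := by
  have hcont : ∀ f : ℝ → ℝ, ContinuousOn f (spectrum ℝ a) := hfin.continuousOn
  -- `(x - μ)⁻¹ * (x - μ)` is the indicator of `x ≠ μ`, thanks to `0⁻¹ = 0`.
  have hcompl : 1 - spectralProjection a μ =
      cfc (fun x => (x - μ)⁻¹) a * (a - algebraMap ℝ A μ) := by
    have hsub := cfc_sub (fun x : ℝ => x) (fun _ => μ) a (hcont _) (hcont _)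
    rw [cfc_id' ℝ a, cfc_const μ a] at hsub
    rw [← hsub, ← cfc_mul _ _ _ (hcont _) (hcont _), spectralProjection, ← cfc_one ℝ a,
      ← cfc_sub _ _ _ (hcont _) (hcont _)]
    refine cfc_congr fun x _ => ?_
    by_cases h : x = μ
    · simp [h]
    · simp [h, sub_ne_zero.mpr h]
  have hkill : (1 - spectralProjection a μ) * b = 0 := by
    rw [hcompl, mul_assoc, sub_mul, hb, ← Algebra.smul_def, sub_self, mul_zero]
  rwa [sub_mul, one_mul, sub_eq_zero, eq_comm] at hkill

theorem tendsto_cfc_exp_neg_mul_sub_spectralProjection (hfin : (spectrum ℝ a).Finite)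
    (hμ : ∀ x ∈ spectrum ℝ a, μ ≤ x) :
    Tendsto (fun τ : ℝ => cfc (fun x => Real.exp (-(τ * (x - μ)))) a) atTop
      (𝓝 (spectralProjection a μ)) := by
  refine tendsto_cfc_fun (hfin.tendstoUniformlyOn fun x hx => ?_)
    (Eventually.of_forall fun _ => hfin.continuousOn _)
  rcases (hμ x hx).eq_or_lt with rfl | hlt
  · simp
  · rw [if_neg hlt.ne']
    exact Real.tendsto_exp_neg_atTop_nhds_zero.comp (tendsto_id.atTop_mul_const (sub_pos.2 hlt))

end SpectralProjection

namespace Matrix.IsHermitian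

variable {ι 𝕜 : Type*} [RCLike 𝕜] [Fintype ι] [DecidableEq ι] {H : Matrix ι ι 𝕜}

theorem exp_eq_cfc (hH : H.IsHermitian) : NormedSpace.exp H = cfc Real.exp H := by
  set U : Matrix ι ι 𝕜 := ↑hH.eigenvectorUnitary
  have hU : U⁻¹ = star U := inv_eq_left_inv (Unitary.coe_star_mul_self _)
  rw [hH.cfc_eq, IsHermitian.cfc, Unitary.conjStarAlgAut_apply]
  conv_lhs => rw [hH.spectral_theorem, Unitary.conjStarAlgAut_apply, ← hU,
    exp_conj _ _ Unitary.isUnit_coe, exp_diagonal]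
  rw [hU]
  congr 3
  ext i
  rw [Pi.coe_exp, Function.comp_apply, Function.comp_apply, Real.exp_eq_exp_ℝ]
  exact (NormedSpace.algebraMap_exp_comm (hH.eigenvalues i)).symm

theorem exp_smul_eq_cfc (hH : H.IsHermitian) (t : ℝ) :
    NormedSpace.exp (t • H) = cfc (fun x => Real.exp (t * x)) H := by
  rw [exp_eq_cfc (hH.smul (IsSelfAdjoint.all t))]
  exact (cfc_comp_smul t Real.exp H).symm

theorem tendsto_exp_mul_smul_exp_neg_smul (hH : H.IsHermitian) {μ : ℝ}
    (hμ : ∀ i, μ ≤ hH.eigenvalues i) :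
    Tendsto (fun τ : ℝ => Real.exp (τ * μ) • NormedSpace.exp (-τ • H)) atTop
      (𝓝 (spectralProjection H μ)) := by
  have hfin : (spectrum ℝ H).Finite := finite_real_spectrum
  refine (tendsto_cfc_exp_neg_mul_sub_spectralProjection hfin ?_).congr fun τ => ?_
  · rw [hH.spectrum_real_eq_range_eigenvalues]
    rintro _ ⟨i, rfl⟩
    exact hμ i
  · rw [hH.exp_smul_eq_cfc, ← cfc_const_mul _ _ _ (hfin.continuousOn _)]
    refine cfc_congr fun x _ => ?_
    rw [← Real.exp_add]
    ring_nf

end Matrix.IsHermitian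

theorem imaginary_time_evolution_tendsto_ground_state_general {n : ℕ}
    (H : Matrix (Fin n) (Fin n) ℂ) (hH : H.IsHermitian)
    (E0 : ℝ)
    (hE0_le : ∀ i, E0 ≤ hH.eigenvalues i)
    (P0 : Matrix (Fin n) (Fin n) ℂ)
    (hP0herm : P0.IsHermitian)
    (hP0range : ∀ v : Fin n → ℂ, H.mulVec (P0.mulVec v) = (E0 : ℂ) • P0.mulVec v)
    (hP0fix : ∀ v : Fin n → ℂ, H.mulVec v = (E0 : ℂ) • v → P0.mulVec v = v)
    (ψ : Fin n → ℂ) (hψ : P0.mulVec ψ ≠ 0) :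
    Tendsto
      (fun τ : ℝ =>
        (‖(WithLp.equiv 2 (Fin n → ℂ)).symm ((NormedSpace.exp (-τ • H)).mulVec ψ)‖⁻¹ : ℝ) •
          (WithLp.equiv 2 (Fin n → ℂ)).symm ((NormedSpace.exp (-τ • H)).mulVec ψ))
      atTop
      (nhds ((‖(WithLp.equiv 2 (Fin n → ℂ)).symm (P0.mulVec ψ)‖⁻¹ : ℝ) •
          (WithLp.equiv 2 (Fin n → ℂ)).symm (P0.mulVec ψ))) := by
  have hfin : (spectrum ℝ H).Finite := finite_real_spectrum
  have hHP0 : H * P0 = E0 • P0 := ext_iff_mulVec.2 fun v => by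
    rw [← mulVec_mulVec, hP0range, smul_mulVec, Complex.coe_smul]
  have hP0 : spectralProjection H E0 = P0 := by
    refine (isSelfAdjoint_spectralProjection H E0).eq_of_mul_eq_of_mul_eq hP0herm
      (spectralProjection_mul_of_mul_eq_smul hfin hH hHP0) (ext_iff_mulVec.2 fun v => ?_)
    rw [← mulVec_mulVec]
    refine hP0fix _ ?_
    rw [mulVec_mulVec, mul_spectralProjection hfin hH, smul_mulVec, Complex.coe_smul]
  have hlim := hP0 ▸ hH.tendsto_exp_mul_smul_exp_neg_smul hE0_le
  have hvec : Continuous fun M : Matrix (Fin n) (Fin n) ℂ =>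
      (WithLp.equiv 2 (Fin n → ℂ)).symm (M *ᵥ ψ) :=
    (PiLp.continuous_toLp 2 _).comp (continuous_id.matrix_mulVec continuous_const)
  refine NormedSpace.tendsto_normalize_of_tendsto_smul (c := fun τ => Real.exp (τ * E0))
    (fun _ => Real.exp_pos _) ?_ (by simpa using hψ)
  simpa only [Function.comp_def, smul_mulVec, WithLp.equiv_symm_apply, WithLp.toLp_smul]
    using (hvec.tendsto P0).comp hlim

/-- **Imaginary-time evolution converges to the ground state.** Let `H` be an `n×n` Hermitian
matrix with smallest eigenvalue `E₀` and let `P₀` be the orthogonal projection onto the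
`E₀`-eigenspace (characterized as a Hermitian idempotent whose range lies in the eigenspace and
which fixes the eigenspace). If `P₀ψ ≠ 0`, then as `τ → ∞` the normalized
imaginary-time-evolved state `exp(-τH)ψ / ‖exp(-τH)ψ‖` converges (in Euclidean norm) to
`P₀ψ / ‖P₀ψ‖`. -/
theorem imaginary_time_evolution_tendsto_ground_state {n : ℕ}
    (H : Matrix (Fin n) (Fin n) ℂ) (hH : H.IsHermitian)
    (E0 : ℝ)
    (hE0_le : ∀ i, E0 ≤ hH.eigenvalues i)
    (hE0_mem : ∃ i, hH.eigenvalues i = E0)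
    (P0 : Matrix (Fin n) (Fin n) ℂ)
    (hP0herm : P0.IsHermitian)
    (hP0idem : P0 * P0 = P0)
    (hP0range : ∀ v : Fin n → ℂ, H.mulVec (P0.mulVec v) = (E0 : ℂ) • P0.mulVec v)
    (hP0fix : ∀ v : Fin n → ℂ, H.mulVec v = (E0 : ℂ) • v → P0.mulVec v = v)
    (ψ : Fin n → ℂ) (hψ : P0.mulVec ψ ≠ 0) :
    Tendsto
      (fun τ : ℝ =>
        (‖(WithLp.equiv 2 (Fin n → ℂ)).symm ((NormedSpace.exp (-τ • H)).mulVec ψ)‖⁻¹ : ℝ) •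
          (WithLp.equiv 2 (Fin n → ℂ)).symm ((NormedSpace.exp (-τ • H)).mulVec ψ))
      atTop
      (nhds ((‖(WithLp.equiv 2 (Fin n → ℂ)).symm (P0.mulVec ψ)‖⁻¹ : ℝ) •
          (WithLp.equiv 2 (Fin n → ℂ)).symm (P0.mulVec ψ))) :=
  imaginary_time_evolution_tendsto_ground_state_general H hH E0 hE0_le P0 hP0herm hP0range hP0fix ψ
    hψ
end
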